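/- For every integer n ≥ 1 there exists an integer r' ≥ n such that the set of values that I' attains on the n-chotomic quantum correlations is independent of the number of outcomes beyond r': for all r ≥ r', { I'(P) : P ∈ 𝒫₂[n,r] } = { I'(P) : P ∈ 𝒫₂[n,r'] }. Consequently, q_n = q_{n,r'}. -/

import Mathlib

open Matrix Kronecker BigOperators
open scoped ComplexOrder

noncomputable section

/-- A bipartite correlation with two settings per party (`μ ν : Fin 2`, where index
`0` is setting 1 and index `1` is setting 2) and `r` outcomes per setting
(`k ℓ : Fin r`, where index `i` is outcome `i+1`): all probabilities are
nonnegative and, for each pair of settings, they sum to one. -/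
def IsCorrelation (r : ℕ) (P : Fin 2 → Fin 2 → Fin r → Fin r → ℝ) : Prop :=
  (∀ μ ν k ℓ, 0 ≤ P μ ν k ℓ) ∧ (∀ μ ν, ∑ k, ∑ ℓ, P μ ν k ℓ = 1)

/-- The Zohren–Gill expression
`I'(P) = P₂₂(k<ℓ) + P₁₂(k>ℓ) + P₁₁(k<ℓ) + P₂₁(k≥ℓ)`. -/
def ZG {r : ℕ} (P : Fin 2 → Fin 2 → Fin r → Fin r → ℝ) : ℝ :=
    (∑ k, ∑ ℓ, if k < ℓ then P 1 1 k ℓ else 0)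
  + (∑ k, ∑ ℓ, if ℓ < k then P 0 1 k ℓ else 0)
  + (∑ k, ∑ ℓ, if k < ℓ then P 0 0 k ℓ else 0)
  + (∑ k, ∑ ℓ, if ℓ ≤ k then P 1 0 k ℓ else 0)

/-- `P ∈ 𝒫₂[n,r]`: `P` is an `n`-chotomic quantum correlation with two settings per
party and `r` outcomes per setting.  There are a finite index set `Fin a`,
dimensions `dA, dB ≥ 1`, positive semidefinite states `η α` on the tensor product
space with total trace one, and for each setting positive semidefinite local
measurement operators summing to the identity with at most `n` nonzero members
for each `α`, reproducing `P` via the Born rule. -/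
def IsNChotomicQC (n r : ℕ) (P : Fin 2 → Fin 2 → Fin r → Fin r → ℝ) : Prop :=
  IsCorrelation r P ∧
  ∃ (a dA dB : ℕ), 1 ≤ dA ∧ 1 ≤ dB ∧
  ∃ (η : Fin a → Matrix (Fin dA × Fin dB) (Fin dA × Fin dB) ℂ)
    (DA : Fin 2 → Fin a → Fin r → Matrix (Fin dA) (Fin dA) ℂ)
    (DB : Fin 2 → Fin a → Fin r → Matrix (Fin dB) (Fin dB) ℂ),
    (∀ α, (η α).PosSemidef) ∧ (∑ α, (η α).trace) = 1 ∧
    (∀ μ α k, (DA μ α k).PosSemidef) ∧ (∀ μ α, ∑ k, DA μ α k = 1) ∧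
    (∀ μ α, {k | DA μ α k ≠ 0}.ncard ≤ n) ∧
    (∀ ν α k, (DB ν α k).PosSemidef) ∧ (∀ ν α, ∑ k, DB ν α k = 1) ∧
    (∀ ν α, {k | DB ν α k ≠ 0}.ncard ≤ n) ∧
    (∀ μ ν k ℓ, (P μ ν k ℓ : ℂ) = ∑ α, (η α * (DA μ α k ⊗ₖ DB ν α ℓ)).trace)

/-- `q_{n,r} = inf { I'(P) : P ∈ 𝒫₂[n,r] }`. -/
def qnr (n r : ℕ) : ℝ := sInf {x | ∃ P, IsNChotomicQC n r P ∧ ZG P = x}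

/-- `q_n = inf { q_{n,r} : r ≥ n }`. -/
def qn (n : ℕ) : ℝ := sInf {x | ∃ r, n ≤ r ∧ qnr n r = x}

/-- The no-signaling condition for a bipartite correlation. -/
def NoSignaling (r : ℕ) (P : Fin 2 → Fin 2 → Fin r → Fin r → ℝ) : Prop :=
  (∀ μ k, ∑ ℓ, P μ 0 k ℓ = ∑ ℓ, P μ 1 k ℓ) ∧
  (∀ ν ℓ, ∑ k, P 0 ν k ℓ = ∑ k, P 1 ν k ℓ)

/-- Merging the last outcome (outcome `r+1`, index `Fin.last r`) with the first
outcome (index `0`) on both parties, turning a correlation with `r+1` outcomes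
into one with `r` outcomes. -/
def mergeLast {r : ℕ} (P : Fin 2 → Fin 2 → Fin (r+1) → Fin (r+1) → ℝ) :
    Fin 2 → Fin 2 → Fin r → Fin r → ℝ :=
  fun μ ν k ℓ =>
    P μ ν k.castSucc ℓ.castSucc
    + (if (k : ℕ) = 0 then P μ ν (Fin.last r) ℓ.castSucc else 0)
    + (if (ℓ : ℕ) = 0 then P μ ν k.castSucc (Fin.last r) else 0)
    + (if (k : ℕ) = 0 ∧ (ℓ : ℕ) = 0 then P μ ν (Fin.last r) (Fin.last r) else 0)

set_option linter.unusedSectionVars false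
set_option maxHeartbeats 1000000

section Aux
variable {dm dn : Type*} [Fintype dm] [Fintype dn] [DecidableEq dm] [DecidableEq dn]

lemma aux_psd_trace_nonneg {A : Matrix dm dm ℂ} (hA : A.PosSemidef) : 0 ≤ A.trace := by
  obtain ⟨B, rfl⟩ : ∃ B : Matrix dm dm ℂ, A = Bᴴ * B := by
    open scoped MatrixOrder in exact CStarAlgebra.nonneg_iff_eq_star_mul_self.mp hA.nonneg
  rw [Matrix.trace]
  refine Finset.sum_nonneg fun i _ => ?_
  simp only [Matrix.diag_apply, Matrix.mul_apply, Matrix.conjTranspose_apply]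
  exact Finset.sum_nonneg fun j _ => star_mul_self_nonneg _

lemma aux_trace_mul_psd {A M : Matrix dm dm ℂ} (hA : A.PosSemidef) (hM : M.PosSemidef) :
    0 ≤ (A * M).trace := by
  obtain ⟨B, rfl⟩ : ∃ B : Matrix dm dm ℂ, A = Bᴴ * B := by
    open scoped MatrixOrder in exact CStarAlgebra.nonneg_iff_eq_star_mul_self.mp hA.nonneg
  rw [Matrix.mul_assoc, Matrix.trace_mul_comm]
  exact aux_psd_trace_nonneg (hM.mul_mul_conjTranspose_same B)

lemma aux_kron_conjT (A : Matrix dm dm ℂ) (B : Matrix dn dn ℂ) :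
    (A ⊗ₖ B)ᴴ = Aᴴ ⊗ₖ Bᴴ := by
  ext ⟨i, j⟩ ⟨k, l⟩
  simp [Matrix.conjTranspose_apply, Matrix.kroneckerMap_apply, mul_comm]

lemma aux_psd_kron {A : Matrix dm dm ℂ} {B : Matrix dn dn ℂ}
    (hA : A.PosSemidef) (hB : B.PosSemidef) : (A ⊗ₖ B).PosSemidef := by
  obtain ⟨C, rfl⟩ : ∃ C : Matrix dm dm ℂ, A = Cᴴ * C := by
    open scoped MatrixOrder in exact CStarAlgebra.nonneg_iff_eq_star_mul_self.mp hA.nonneg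
  obtain ⟨D, rfl⟩ : ∃ D : Matrix dn dn ℂ, B = Dᴴ * D := by
    open scoped MatrixOrder in exact CStarAlgebra.nonneg_iff_eq_star_mul_self.mp hB.nonneg
  rw [Matrix.mul_kronecker_mul, ← aux_kron_conjT]
  exact Matrix.posSemidef_conjTranspose_mul_self _

lemma aux_psd_sum {ι : Type*} (s : Finset ι) (A : ι → Matrix dm dm ℂ)
    (h : ∀ i ∈ s, (A i).PosSemidef) : (∑ i ∈ s, A i).PosSemidef := by
  classical
  induction s using Finset.induction with
  | empty => simpa using Matrix.PosSemidef.zero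
  | @insert x s hx ih =>
    rw [Finset.sum_insert hx]
    exact (h _ (Finset.mem_insert_self _ _)).add
      (ih fun i hi => h i (Finset.mem_insert_of_mem hi))

lemma aux_sum_kron {ι κ : Type*} (s : Finset ι) (t : Finset κ)
    (A : ι → Matrix dm dm ℂ) (B : κ → Matrix dn dn ℂ) :
    (∑ i ∈ s, A i) ⊗ₖ (∑ j ∈ t, B j) = ∑ i ∈ s, ∑ j ∈ t, A i ⊗ₖ B j := by
  ext ⟨a, b⟩ ⟨c, d⟩
  simp [Matrix.kroneckerMap_apply, Matrix.sum_apply, Finset.sum_mul_sum]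

lemma aux_trace_mul_kron_sum {ι κ : Type*} (s : Finset ι) (t : Finset κ)
    (η : Matrix (dm × dn) (dm × dn) ℂ) (A : ι → Matrix dm dm ℂ) (B : κ → Matrix dn dn ℂ) :
    (η * ((∑ i ∈ s, A i) ⊗ₖ (∑ j ∈ t, B j))).trace
      = ∑ i ∈ s, ∑ j ∈ t, (η * (A i ⊗ₖ B j)).trace := by
  rw [aux_sum_kron]
  simp [Matrix.mul_sum, Matrix.trace_sum]

end Aux

lemma aux_exists_mono_embed {r1 r2 : ℕ} (h2 : 0 < r2) (S : Finset (Fin r1))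
    (hcard : S.card ≤ r2) :
    ∃ f : Fin r1 → Fin r2, ∀ k ∈ S, ∀ l ∈ S, (k < l ↔ f k < f l) := by
  classical
  refine ⟨fun k => if hk : k ∈ S then Fin.castLE hcard ((S.orderIsoOfFin rfl).symm ⟨k, hk⟩)
    else ⟨0, h2⟩, ?_⟩
  intro k hk l hl
  simp only [dif_pos hk, dif_pos hl]
  rw [(Fin.strictMono_castLE hcard).lt_iff_lt, OrderIso.lt_iff_lt]
  exact Iff.symm Subtype.mk_lt_mk

lemma ZG_nonneg {r : ℕ} {P : Fin 2 → Fin 2 → Fin r → Fin r → ℝ} (h : IsCorrelation r P) :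
    0 ≤ ZG P := by
  refine add_nonneg (add_nonneg (add_nonneg ?_ ?_) ?_) ?_ <;>
    exact Finset.sum_nonneg fun k _ => Finset.sum_nonneg fun l _ => by
      split
      · exact h.1 _ _ _ _
      · exact le_rfl

lemma transport {n r1 r2 : ℕ} (P : Fin 2 → Fin 2 → Fin r1 → Fin r1 → ℝ)
    (hP : IsNChotomicQC n r1 P)
    (hf : ∀ S : Finset (Fin r1), S.card ≤ 4 * n →
      ∃ f : Fin r1 → Fin r2, ∀ k ∈ S, ∀ l ∈ S, (k < l ↔ f k < f l)) :
    ∃ Q : Fin 2 → Fin 2 → Fin r2 → Fin r2 → ℝ, IsNChotomicQC n r2 Q ∧ ZG Q = ZG P := by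
  classical
  obtain ⟨⟨hpos, hsum⟩, a, dA, dB, hdA, hdB, η, DA, DB, hη, hηtr, hDApsd, hDAsum, hDAcard,
    hDBpsd, hDBsum, hDBcard, hBorn⟩ := hP
  set S : Fin a → Finset (Fin r1) := fun α => Finset.univ.filter
    (fun k => DA 0 α k ≠ 0 ∨ DA 1 α k ≠ 0 ∨ DB 0 α k ≠ 0 ∨ DB 1 α k ≠ 0) with hS
  have hSnot : ∀ (μ : Fin 2) α k, k ∉ S α → DA μ α k = 0 ∧ DB μ α k = 0 := by
    intro μ α k hk
    simp only [hS, Finset.mem_filter, Finset.mem_univ, true_and, not_or, not_not] at hk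
    fin_cases μ <;> exact ⟨by tauto, by tauto⟩
  have hcardf : ∀ {d : ℕ} (D : Fin r1 → Matrix (Fin d) (Fin d) ℂ),
      (Finset.univ.filter (fun k => D k ≠ 0)).card = {k | D k ≠ 0}.ncard := by
    intro d D
    rw [Set.ncard_eq_toFinset_card', Set.toFinset_setOf]
  have hScard : ∀ α, (S α).card ≤ 4 * n := by
    intro α
    have hsub : S α ⊆ ((Finset.univ.filter (fun k => DA 0 α k ≠ 0)) ∪
        Finset.univ.filter (fun k => DA 1 α k ≠ 0)) ∪
        ((Finset.univ.filter (fun k => DB 0 α k ≠ 0)) ∪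
        Finset.univ.filter (fun k => DB 1 α k ≠ 0)) := by
      intro k hk
      simp only [hS, Finset.mem_filter, Finset.mem_univ, true_and] at hk
      simp only [Finset.mem_union, Finset.mem_filter, Finset.mem_univ, true_and]
      tauto
    have h1 := Finset.card_le_card hsub
    have h2 := Finset.card_union_le ((Finset.univ.filter (fun k => DA 0 α k ≠ 0)) ∪
        Finset.univ.filter (fun k => DA 1 α k ≠ 0))
        ((Finset.univ.filter (fun k => DB 0 α k ≠ 0)) ∪
        Finset.univ.filter (fun k => DB 1 α k ≠ 0))
    have h3 := Finset.card_union_le (Finset.univ.filter (fun k => DA 0 α k ≠ 0))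
        (Finset.univ.filter (fun k => DA 1 α k ≠ 0))
    have h4 := Finset.card_union_le (Finset.univ.filter (fun k => DB 0 α k ≠ 0))
        (Finset.univ.filter (fun k => DB 1 α k ≠ 0))
    have e1 : (Finset.univ.filter (fun k => DA 0 α k ≠ 0)).card ≤ n := by
      rw [hcardf]; exact hDAcard 0 α
    have e2 : (Finset.univ.filter (fun k => DA 1 α k ≠ 0)).card ≤ n := by
      rw [hcardf]; exact hDAcard 1 α
    have e3 : (Finset.univ.filter (fun k => DB 0 α k ≠ 0)).card ≤ n := by
      rw [hcardf]; exact hDBcard 0 α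
    have e4 : (Finset.univ.filter (fun k => DB 1 α k ≠ 0)).card ≤ n := by
      rw [hcardf]; exact hDBcard 1 α
    omega
  choose f hfmono using fun α => hf (S α) (hScard α)
  set DA' : Fin 2 → Fin a → Fin r2 → Matrix (Fin dA) (Fin dA) ℂ :=
    fun μ α k' => ∑ k ∈ (S α).filter (fun k => f α k = k'), DA μ α k with hDA'
  set DB' : Fin 2 → Fin a → Fin r2 → Matrix (Fin dB) (Fin dB) ℂ :=
    fun ν α l' => ∑ l ∈ (S α).filter (fun l => f α l = l'), DB ν α l with hDB'
  have hDA'psd : ∀ μ α k', (DA' μ α k').PosSemidef :=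
    fun μ α k' => aux_psd_sum _ _ (fun k _ => hDApsd μ α k)
  have hDB'psd : ∀ ν α l', (DB' ν α l').PosSemidef :=
    fun ν α l' => aux_psd_sum _ _ (fun l _ => hDBpsd ν α l)
  have hDA'sum : ∀ μ α, ∑ k', DA' μ α k' = 1 := by
    intro μ α
    rw [show ∑ k', DA' μ α k'
        = ∑ k' : Fin r2, ∑ k ∈ (S α).filter (fun k => f α k = k'), DA μ α k from rfl]
    rw [Finset.sum_fiberwise (S α) (f α) (DA μ α)]
    rw [← hDAsum μ α]
    exact Finset.sum_subset (Finset.subset_univ _) fun k _ hk => (hSnot μ α k hk).1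
  have hDB'sum : ∀ ν α, ∑ l', DB' ν α l' = 1 := by
    intro ν α
    rw [show ∑ l', DB' ν α l'
        = ∑ l' : Fin r2, ∑ l ∈ (S α).filter (fun l => f α l = l'), DB ν α l from rfl]
    rw [Finset.sum_fiberwise (S α) (f α) (DB ν α)]
    rw [← hDBsum ν α]
    exact Finset.sum_subset (Finset.subset_univ _) fun l _ hl => (hSnot ν α l hl).2
  have hDA'card : ∀ μ α, {k' | DA' μ α k' ≠ 0}.ncard ≤ n := by
    intro μ α
    have hsub : {k' | DA' μ α k' ≠ 0} ⊆ f α '' {k | DA μ α k ≠ 0} := by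
      intro k' hk'
      simp only [Set.mem_setOf_eq] at hk'
      by_contra him
      refine hk' (Finset.sum_eq_zero fun k hk => ?_)
      simp only [Finset.mem_filter] at hk
      by_contra hne
      exact him ⟨k, hne, hk.2⟩
    calc {k' | DA' μ α k' ≠ 0}.ncard ≤ (f α '' {k | DA μ α k ≠ 0}).ncard :=
          Set.ncard_le_ncard hsub (Set.toFinite _)
      _ ≤ {k | DA μ α k ≠ 0}.ncard := Set.ncard_image_le (Set.toFinite _)
      _ ≤ n := hDAcard μ α
  have hDB'card : ∀ ν α, {l' | DB' ν α l' ≠ 0}.ncard ≤ n := by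
    intro ν α
    have hsub : {l' | DB' ν α l' ≠ 0} ⊆ f α '' {l | DB ν α l ≠ 0} := by
      intro l' hl'
      simp only [Set.mem_setOf_eq] at hl'
      by_contra him
      refine hl' (Finset.sum_eq_zero fun l hl => ?_)
      simp only [Finset.mem_filter] at hl
      by_contra hne
      exact him ⟨l, hne, hl.2⟩
    calc {l' | DB' ν α l' ≠ 0}.ncard ≤ (f α '' {l | DB ν α l ≠ 0}).ncard :=
          Set.ncard_le_ncard hsub (Set.toFinite _)
      _ ≤ {l | DB ν α l ≠ 0}.ncard := Set.ncard_image_le (Set.toFinite _)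
      _ ≤ n := hDBcard ν α
  have htr : ∀ (μ ν : Fin 2) α k' l', (η α * (DA' μ α k' ⊗ₖ DB' ν α l')).trace
      = ∑ k ∈ (S α).filter (fun k => f α k = k'), ∑ l ∈ (S α).filter (fun l => f α l = l'),
        (η α * (DA μ α k ⊗ₖ DB ν α l)).trace :=
    fun μ ν α k' l' => aux_trace_mul_kron_sum _ _ _ _ _
  have htrpos : ∀ (μ ν : Fin 2) α k' l', 0 ≤ (η α * (DA' μ α k' ⊗ₖ DB' ν α l')).trace :=
    fun μ ν α k' l' => aux_trace_mul_psd (hη α)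
      (aux_psd_kron (hDA'psd μ α k') (hDB'psd ν α l'))
  set Q : Fin 2 → Fin 2 → Fin r2 → Fin r2 → ℝ := fun μ ν k' l' =>
    (∑ α, (η α * (DA' μ α k' ⊗ₖ DB' ν α l')).trace).re with hQ
  have hQsumpos : ∀ (μ ν : Fin 2) k' l',
      0 ≤ ∑ α, (η α * (DA' μ α k' ⊗ₖ DB' ν α l')).trace :=
    fun μ ν k' l' => Finset.sum_nonneg fun α _ => htrpos μ ν α _ _
  have hQc : ∀ (μ ν : Fin 2) k' l',
      (Q μ ν k' l' : ℂ) = ∑ α, (η α * (DA' μ α k' ⊗ₖ DB' ν α l')).trace := by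
    intro μ ν k' l'
    have h0 := hQsumpos μ ν k' l'
    rw [Complex.le_def] at h0
    apply Complex.ext
    · simp [hQ]
    · simp [hQ, ← h0.2]
  have hQpos : ∀ (μ ν : Fin 2) k' l', 0 ≤ Q μ ν k' l' := by
    intro μ ν k' l'
    have h0 := hQsumpos μ ν k' l'
    rw [Complex.le_def] at h0
    simpa [hQ] using h0.1
  have hQsum1 : ∀ (μ ν : Fin 2), ∑ k', ∑ l', Q μ ν k' l' = 1 := by
    intro μ ν
    have hC : ∑ k' : Fin r2, ∑ l' : Fin r2, (Q μ ν k' l' : ℂ) = 1 := by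
      simp_rw [hQc]
      calc ∑ k' : Fin r2, ∑ l' : Fin r2, ∑ α, (η α * (DA' μ α k' ⊗ₖ DB' ν α l')).trace
          = ∑ k' : Fin r2, ∑ α, ∑ l' : Fin r2, (η α * (DA' μ α k' ⊗ₖ DB' ν α l')).trace :=
            Finset.sum_congr rfl fun k' _ => Finset.sum_comm
        _ = ∑ α, ∑ k' : Fin r2, ∑ l' : Fin r2, (η α * (DA' μ α k' ⊗ₖ DB' ν α l')).trace :=
            Finset.sum_comm
        _ = ∑ α, (η α * ((∑ k' : Fin r2, DA' μ α k') ⊗ₖ (∑ l' : Fin r2, DB' ν α l'))).trace :=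
            Finset.sum_congr rfl fun α _ => (aux_trace_mul_kron_sum _ _ _ _ _).symm
        _ = ∑ α, (η α).trace := by
            refine Finset.sum_congr rfl fun α _ => ?_
            rw [hDA'sum μ α, hDB'sum ν α, Matrix.one_kronecker_one, mul_one]
        _ = 1 := hηtr
    have := congrArg Complex.re hC
    simpa [Complex.re_sum] using this
  refine ⟨Q, ⟨⟨hQpos, hQsum1⟩, a, dA, dB, hdA, hdB, η, DA', DB', hη, hηtr, hDA'psd, hDA'sum,
    hDA'card, hDB'psd, hDB'sum, hDB'card, hQc⟩, ?_⟩
  -- ZG equality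
  have key : ∀ (μ ν : Fin 2) (R : ℕ → ℕ → Bool),
      (∀ x y x' y' : ℕ, (x < y ↔ x' < y') → (y < x ↔ y' < x') → R x y = R x' y') →
      ∑ k' : Fin r2, ∑ l' : Fin r2, (if R (k' : ℕ) (l' : ℕ) then Q μ ν k' l' else 0)
        = ∑ k : Fin r1, ∑ l : Fin r1, (if R (k : ℕ) (l : ℕ) then P μ ν k l else 0) := by
    intro μ ν R hR
    have hC : ∑ k' : Fin r2, ∑ l' : Fin r2, (if R (k' : ℕ) (l' : ℕ)
          then ∑ α, (η α * (DA' μ α k' ⊗ₖ DB' ν α l')).trace else 0)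
        = ∑ k : Fin r1, ∑ l : Fin r1, (if R (k : ℕ) (l : ℕ)
          then ∑ α, (η α * (DA μ α k ⊗ₖ DB ν α l)).trace else 0) := by
      have pull : ∀ (r : ℕ) (W : Fin r → Fin r → Fin a → ℂ),
          ∑ k : Fin r, ∑ l : Fin r, (if R (k : ℕ) (l : ℕ) then ∑ α, W k l α else 0)
          = ∑ α, ∑ k : Fin r, ∑ l : Fin r, (if R (k : ℕ) (l : ℕ) then W k l α else 0) := by
        intro r W
        have h1 : ∀ (k l : Fin r), (if R (k : ℕ) (l : ℕ) then ∑ α, W k l α else 0)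
            = ∑ α, (if R (k : ℕ) (l : ℕ) then W k l α else 0) := by
          intro k l; split <;> simp
        simp_rw [h1]
        calc ∑ k : Fin r, ∑ l : Fin r, ∑ α, (if R (k : ℕ) (l : ℕ) then W k l α else 0)
            = ∑ k : Fin r, ∑ α, ∑ l : Fin r, (if R (k : ℕ) (l : ℕ) then W k l α else 0) :=
              Finset.sum_congr rfl fun k _ => Finset.sum_comm
          _ = ∑ α, ∑ k : Fin r, ∑ l : Fin r, (if R (k : ℕ) (l : ℕ) then W k l α else 0) :=
              Finset.sum_comm
      rw [pull r2 (fun k' l' α => (η α * (DA' μ α k' ⊗ₖ DB' ν α l')).trace),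
        pull r1 (fun k l α => (η α * (DA μ α k ⊗ₖ DB ν α l)).trace)]
      refine Finset.sum_congr rfl fun α _ => ?_
      have e1 : ∀ (k' l' : Fin r2), (if R (k' : ℕ) (l' : ℕ)
            then (η α * (DA' μ α k' ⊗ₖ DB' ν α l')).trace else 0)
          = ∑ k ∈ (S α).filter (fun k => f α k = k'),
            ∑ l ∈ (S α).filter (fun l => f α l = l'),
              (if R (f α k : ℕ) (f α l : ℕ)
                then (η α * (DA μ α k ⊗ₖ DB ν α l)).trace else 0) := by
        intro k' l'
        by_cases h : R (k' : ℕ) (l' : ℕ)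
        · rw [if_pos h, htr μ ν α k' l']
          refine Finset.sum_congr rfl fun k hk => Finset.sum_congr rfl fun l hl => ?_
          simp only [Finset.mem_filter] at hk hl
          rw [hk.2, hl.2, if_pos h]
        · rw [if_neg h]
          refine (Finset.sum_eq_zero fun k hk => Finset.sum_eq_zero fun l hl => ?_).symm
          simp only [Finset.mem_filter] at hk hl
          rw [hk.2, hl.2, if_neg h]
      simp_rw [e1]
      calc ∑ k' : Fin r2, ∑ l' : Fin r2, ∑ k ∈ (S α).filter (fun k => f α k = k'),
              ∑ l ∈ (S α).filter (fun l => f α l = l'),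
              (if R (f α k : ℕ) (f α l : ℕ)
                then (η α * (DA μ α k ⊗ₖ DB ν α l)).trace else 0)
          = ∑ k' : Fin r2, ∑ k ∈ (S α).filter (fun k => f α k = k'), ∑ l' : Fin r2,
              ∑ l ∈ (S α).filter (fun l => f α l = l'),
              (if R (f α k : ℕ) (f α l : ℕ)
                then (η α * (DA μ α k ⊗ₖ DB ν α l)).trace else 0) :=
            Finset.sum_congr rfl fun k' _ => Finset.sum_comm
        _ = ∑ k' : Fin r2, ∑ k ∈ (S α).filter (fun k => f α k = k'), ∑ l ∈ S α,
              (if R (f α k : ℕ) (f α l : ℕ)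
                then (η α * (DA μ α k ⊗ₖ DB ν α l)).trace else 0) :=
            Finset.sum_congr rfl fun k' _ => Finset.sum_congr rfl fun k _ =>
              Finset.sum_fiberwise _ _ _
        _ = ∑ k ∈ S α, ∑ l ∈ S α,
              (if R (f α k : ℕ) (f α l : ℕ)
                then (η α * (DA μ α k ⊗ₖ DB ν α l)).trace else 0) :=
            Finset.sum_fiberwise _ _ _
        _ = ∑ k ∈ S α, ∑ l ∈ S α,
              (if R (k : ℕ) (l : ℕ)
                then (η α * (DA μ α k ⊗ₖ DB ν α l)).trace else 0) := by
            refine Finset.sum_congr rfl fun k hk => Finset.sum_congr rfl fun l hl => ?_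
            have h1 : (k : ℕ) < (l : ℕ) ↔ (f α k : ℕ) < (f α l : ℕ) :=
              hfmono α k hk l hl
            have h2 : (l : ℕ) < (k : ℕ) ↔ (f α l : ℕ) < (f α k : ℕ) :=
              hfmono α l hl k hk
            rw [hR (k : ℕ) (l : ℕ) (f α k : ℕ) (f α l : ℕ) h1 h2]
        _ = ∑ k ∈ S α, ∑ l : Fin r1,
              (if R (k : ℕ) (l : ℕ)
                then (η α * (DA μ α k ⊗ₖ DB ν α l)).trace else 0) := by
            refine Finset.sum_congr rfl fun k _ => ?_
            refine Finset.sum_subset (Finset.subset_univ _) fun l _ hl => ?_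
            rw [(hSnot ν α l hl).2, Matrix.kronecker_zero, mul_zero, Matrix.trace_zero, ite_self]
        _ = ∑ k : Fin r1, ∑ l : Fin r1,
              (if R (k : ℕ) (l : ℕ)
                then (η α * (DA μ α k ⊗ₖ DB ν α l)).trace else 0) := by
            refine Finset.sum_subset (Finset.subset_univ _) fun k _ hk => ?_
            refine Finset.sum_eq_zero fun l _ => ?_
            rw [(hSnot μ α k hk).1, Matrix.zero_kronecker, mul_zero, Matrix.trace_zero, ite_self]
    calc ∑ k' : Fin r2, ∑ l' : Fin r2, (if R (k' : ℕ) (l' : ℕ) then Q μ ν k' l' else 0)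
        = (∑ k' : Fin r2, ∑ l' : Fin r2, (if R (k' : ℕ) (l' : ℕ)
            then ∑ α, (η α * (DA' μ α k' ⊗ₖ DB' ν α l')).trace else 0)).re := by
          rw [Complex.re_sum]
          refine Finset.sum_congr rfl fun k' _ => ?_
          rw [Complex.re_sum]
          refine Finset.sum_congr rfl fun l' _ => ?_
          rw [apply_ite Complex.re, Complex.zero_re]
      _ = (∑ k : Fin r1, ∑ l : Fin r1, (if R (k : ℕ) (l : ℕ)
            then ∑ α, (η α * (DA μ α k ⊗ₖ DB ν α l)).trace else 0)).re := by rw [hC]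
      _ = ∑ k : Fin r1, ∑ l : Fin r1, (if R (k : ℕ) (l : ℕ) then P μ ν k l else 0) := by
          rw [Complex.re_sum]
          refine Finset.sum_congr rfl fun k _ => ?_
          rw [Complex.re_sum]
          refine Finset.sum_congr rfl fun l _ => ?_
          rw [apply_ite Complex.re, Complex.zero_re, ← hBorn μ ν k l, Complex.ofReal_re]
  have hR1 : ∀ x y x' y' : ℕ, (x < y ↔ x' < y') → (y < x ↔ y' < x') →
      decide (x < y) = decide (x' < y') := fun x y x' y' h1 _ => decide_eq_decide.mpr h1
  have hR2 : ∀ x y x' y' : ℕ, (x < y ↔ x' < y') → (y < x ↔ y' < x') →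
      decide (y < x) = decide (y' < x') := fun x y x' y' _ h2 => decide_eq_decide.mpr h2
  have hR3 : ∀ x y x' y' : ℕ, (x < y ↔ x' < y') → (y < x ↔ y' < x') →
      decide (y ≤ x) = decide (y' ≤ x') := by
    intro x y x' y' h1 _
    refine decide_eq_decide.mpr ?_
    constructor
    · intro h; by_contra hc; exact absurd (h1.mpr (Nat.lt_of_not_le hc)) (Nat.not_lt.mpr h)
    · intro h; by_contra hc; exact absurd (h1.mp (Nat.lt_of_not_le hc)) (Nat.not_lt.mpr h)
  have t1 := key 1 1 (fun x y => decide (x < y)) hR1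
  have t2 := key 0 1 (fun x y => decide (y < x)) hR2
  have t3 := key 0 0 (fun x y => decide (x < y)) hR1
  have t4 := key 1 0 (fun x y => decide (y ≤ x)) hR3
  simp only [decide_eq_true_eq] at t1 t2 t3 t4
  unfold ZG
  simp only [Fin.lt_def, Fin.le_def]
  rw [t1, t2, t3, t4]

lemma exists_member (n r : ℕ) (hn : 1 ≤ n) (hr : 1 ≤ r) :
    ∃ P : Fin 2 → Fin 2 → Fin r → Fin r → ℝ, IsNChotomicQC n r P := by
  haveI : NeZero r := ⟨by omega⟩
  have h10 : (1 : Matrix (Fin 1) (Fin 1) ℂ) ≠ 0 := by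
    intro h
    have := congrArg (fun M : Matrix (Fin 1) (Fin 1) ℂ => M 0 0) h
    simp [Matrix.one_apply] at this
  refine ⟨fun _ _ k l => (if k = 0 then (1:ℝ) else 0) * (if l = 0 then 1 else 0),
    ⟨⟨fun μ ν k l => by positivity, fun μ ν => ?_⟩,
    1, 1, 1, le_refl 1, le_refl 1,
    fun _ => 1,
    fun _ _ k => if k = 0 then 1 else 0,
    fun _ _ l => if l = 0 then 1 else 0,
    fun α => Matrix.PosSemidef.one, ?_,
    fun μ α k => by dsimp only; split; exacts [Matrix.PosSemidef.one, Matrix.PosSemidef.zero],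
    fun μ α => by simp,
    fun μ α => ?_,
    fun ν α k => by dsimp only; split; exacts [Matrix.PosSemidef.one, Matrix.PosSemidef.zero],
    fun ν α => by simp,
    fun ν α => ?_,
    fun μ ν k l => ?_⟩⟩
  · rw [← Finset.sum_mul_sum]
    simp
  · simp [Matrix.trace_one]
  · have he : {k : Fin r | (if k = 0 then (1 : Matrix (Fin 1) (Fin 1) ℂ) else 0) ≠ 0} = {0} := by
      ext k; by_cases hk : k = 0 <;> simp [hk, h10]
    dsimp only
    rw [he, Set.ncard_singleton]; exact hn
  · have he : {k : Fin r | (if k = 0 then (1 : Matrix (Fin 1) (Fin 1) ℂ) else 0) ≠ 0} = {0} := by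
      ext k; by_cases hk : k = 0 <;> simp [hk, h10]
    dsimp only
    rw [he, Set.ncard_singleton]; exact hn
  · by_cases hk : k = 0 <;> by_cases hl : l = 0 <;>
      simp [hk, hl, Matrix.trace_kronecker, apply_ite Matrix.trace,
        Matrix.trace_one, Matrix.trace_zero]

/-- For every `n ≥ 1` there is `r' ≥ n` such that the set of
values `I'` attains on `𝒫₂[n,r]` is the same for all `r ≥ r'`; consequently
`q_n = q_{n,r'}`. -/
theorem exists_stabilizing_outcome_number (n : ℕ) (hn : 1 ≤ n) :
    ∃ r' : ℕ, n ≤ r' ∧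
      (∀ r : ℕ, r' ≤ r →
        {x | ∃ P : Fin 2 → Fin 2 → Fin r → Fin r → ℝ,
            IsNChotomicQC n r P ∧ ZG P = x}
          = {x | ∃ P : Fin 2 → Fin 2 → Fin r' → Fin r' → ℝ,
            IsNChotomicQC n r' P ∧ ZG P = x}) ∧
      qn n = qnr n r' := by
  classical
  refine ⟨4 * n, by omega, ?_, ?_⟩
  case _ =>
    intro r hr
    ext x
    constructor
    · rintro ⟨P, hP, rfl⟩
      obtain ⟨Q, hQ, hZQ⟩ := transport P hP
        (fun S hS => aux_exists_mono_embed (r2 := 4 * n) (by omega) S (by omega))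
      exact ⟨Q, hQ, hZQ⟩
    · rintro ⟨P, hP, rfl⟩
      obtain ⟨Q, hQ, hZQ⟩ := transport P hP
        (fun S _ => ⟨Fin.castLE hr, fun k _ l _ => (Fin.strictMono_castLE hr).lt_iff_lt.symm⟩)
      exact ⟨Q, hQ, hZQ⟩
  case _ =>
    have hbdd : ∀ r : ℕ, BddBelow {x | ∃ P : Fin 2 → Fin 2 → Fin r → Fin r → ℝ,
        IsNChotomicQC n r P ∧ ZG P = x} := by
      intro r
      exact ⟨0, by rintro x ⟨P, hP, rfl⟩; exact ZG_nonneg hP.1⟩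
    have hne : ∀ r : ℕ, 1 ≤ r → Set.Nonempty {x | ∃ P : Fin 2 → Fin 2 → Fin r → Fin r → ℝ,
        IsNChotomicQC n r P ∧ ZG P = x} := by
      intro r hr
      obtain ⟨P, hP⟩ := exists_member n r hn hr
      exact ⟨ZG P, P, hP, rfl⟩
    have hmono : ∀ r : ℕ, 1 ≤ r → qnr n (4 * n) ≤ qnr n r := by
      intro r hr
      refine csInf_le_csInf (hbdd (4 * n)) (hne r hr) ?_
      rintro x ⟨P, hP, rfl⟩
      obtain ⟨Q, hQ, hZQ⟩ := transport P hP
        (fun S hS => aux_exists_mono_embed (r2 := 4 * n) (by omega) S (by omega))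
      exact ⟨Q, hQ, hZQ⟩
    have hq0 : ∀ r : ℕ, 1 ≤ r → 0 ≤ qnr n r := by
      intro r hr
      refine le_csInf (hne r hr) ?_
      rintro x ⟨P, hP, rfl⟩
      exact ZG_nonneg hP.1
    apply le_antisymm
    · exact csInf_le ⟨0, by rintro x ⟨r, hr, rfl⟩; exact hq0 r (le_trans hn hr)⟩
        ⟨4 * n, by omega, rfl⟩
    · refine le_csInf ⟨qnr n (4 * n), 4 * n, by omega, rfl⟩ ?_
      rintro x ⟨r, hr, rfl⟩
      exact hmono r (le_trans hn hr)
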